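/- For all n ≥ 1, any subset S ⊆ 𝔽_3^n containing no three-term arithmetic progression satisfies |S| ≤ 3 · ∑ n!/(a!·b!·c!), where the sum is over all non-negative integers a, b, c with a + b + c = n and b + 2c ≤ 2n/3. Consequently there is a constant κ with 0 < κ < 1 such that |S| ≤ 3^{κ·n} for all sufficiently large n. -/

import Mathlib

/-!
On `𝔽₃ⁿ` the indicator of `x + y + z = 0` is `∏ i, (1 - (xᵢ + yᵢ + zᵢ) ^ 2)`, a polynomial of
degree at most `2n` whose monomials `x^α y^β z^γ` have exponents `< 3`; in each of them one of
`α, β, γ` has degree at most `2n/3`. Grouping the monomials by such a low-degree factor writes the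
indicator as a sum of `3 |E|` slices, `E` the exponent vectors of degree `≤ 2n/3`. On a
progression-free set `S` this indicator is the diagonal tensor, and a diagonal tensor on `S` has
slice rank `|S|`: contracting it against a vector of large support orthogonal to the third family of
slices gives a diagonal matrix of large rank that is a sum of few rank-one matrices. Hence
`|S| ≤ 3 |E|`; `|E|` is the multinomial sum, and Rankin's trick bounds it by `(6553/2304)ⁿ` with
`6553/2304 < 3`.
-/

open Finset Module

theorem Submodule.exists_card_eq_forall_exists_mem_eqOn {K ι : Type*} [Field K] [Fintype ι]
    (W : Submodule K (ι → K)) {d : ℕ} (hd : d ≤ finrank K W) :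
    ∃ J : Finset ι, #J = d ∧ ∀ t : ι → K, ∃ v ∈ W, Set.EqOn v t J := by
  classical
  induction d with
  | zero => exact ⟨∅, card_empty, fun _ => ⟨0, W.zero_mem, by simp⟩⟩
  | succ d ih =>
    obtain ⟨J, hJ, hsurj⟩ := ih (by omega)
    let restrict : W →ₗ[K] (J → K) :=
      (LinearMap.funLeft K K (↑) : (ι → K) →ₗ[K] (J → K)) ∘ₗ W.subtype
    have hker : LinearMap.ker restrict ≠ ⊥ := by
      rw [← Submodule.one_le_finrank_iff]
      have h₁ := restrict.finrank_range_add_finrank_ker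
      have h₂ := (LinearMap.range restrict).finrank_le
      rw [finrank_fintype_fun_eq_card, Fintype.card_coe] at h₂
      omega
    obtain ⟨⟨w, hwW⟩, hwker, hw0⟩ := (Submodule.ne_bot_iff _).1 hker
    have hwJ : ∀ j ∈ J, w j = 0 := fun j hj => congrFun hwker ⟨j, hj⟩
    obtain ⟨i, hi⟩ : ∃ i, w i ≠ 0 := by
      by_contra! h
      exact hw0 (Subtype.ext (funext h))
    have hiJ : i ∉ J := fun h => hi (hwJ i h)
    refine ⟨insert i J, by rw [card_insert_of_notMem hiJ, hJ], fun t => ?_⟩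
    obtain ⟨v, hvW, hv⟩ := hsurj t
    refine ⟨v + ((t i - v i) / w i) • w, W.add_mem hvW (W.smul_mem _ hwW), ?_⟩
    intro j hj
    rcases mem_insert.1 hj with rfl | hj
    · simp [div_mul_cancel₀ _ hi]
    · simp [hv hj, hwJ j hj]

theorem Submodule.exists_mem_finrank_le_card_support {K ι : Type*} [Field K] [Fintype ι]
    [DecidableEq K] (W : Submodule K (ι → K)) :
    ∃ v ∈ W, finrank K W ≤ #{i | v i ≠ 0} := by
  obtain ⟨J, hJ, hsurj⟩ := W.exists_card_eq_forall_exists_mem_eqOn le_rfl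
  obtain ⟨v, hvW, hv⟩ := hsurj 1
  refine ⟨v, hvW, hJ ▸ card_le_card fun j hj => ?_⟩
  simp [hv hj]

theorem card_le_of_diagonal_eq_sum_slices {K ι α β γ : Type*} [Field K] [Fintype ι]
    [DecidableEq ι] (A : Finset α) (B : Finset β) (C : Finset γ)
    (p : α → ι → K) (q : α → ι → ι → K) (r : β → ι → K) (s : β → ι → ι → K)
    (u : γ → ι → K) (v : γ → ι → ι → K)
    (hT : ∀ x y z, ∑ a ∈ A, p a x * q a y z + ∑ b ∈ B, r b y * s b x z +
        ∑ c ∈ C, u c z * v c x y = if x = y ∧ y = z then 1 else 0) :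
    Fintype.card ι ≤ #A + #B + #C := by
  classical
  let U : Matrix C ι K := .of fun c z => u c z
  obtain ⟨h, hhU, hsupp⟩ := (LinearMap.ker U.mulVecLin).exists_mem_finrank_le_card_support
  have hker : Fintype.card ι ≤ #C + finrank K (LinearMap.ker U.mulVecLin) := by
    have h₁ := U.mulVecLin.finrank_range_add_finrank_ker
    have h₂ := (LinearMap.range U.mulVecLin).finrank_le
    rw [finrank_fintype_fun_eq_card] at h₁ h₂
    rw [Fintype.card_coe] at h₂
    omega
  have hu (c) (hc : c ∈ C) : ∑ z, u c z * h z = 0 := congrFun hhU ⟨c, hc⟩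
  -- contracting the third variable against `h` kills the slices through `u`
  have hdiag : Matrix.diagonal h =
      Matrix.of (fun x (ab : A ⊕ B) =>
          Sum.elim (fun a : A => p a x) (fun b : B => ∑ z, s b x z * h z) ab) *
        Matrix.of (fun (ab : A ⊕ B) y =>
          Sum.elim (fun a : A => ∑ z, q a y z * h z) (fun b : B => r b y) ab) := by
    ext x y
    calc Matrix.diagonal h x y = ∑ z, (if x = y ∧ y = z then 1 else 0) * h z := by
          by_cases hxy : x = y <;> simp [hxy]
      _ = ∑ a ∈ A, p a x * ∑ z, q a y z * h z + ∑ b ∈ B, (∑ z, s b x z * h z) * r b y +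
            ∑ c ∈ C, v c x y * ∑ z, u c z * h z := by
          simp_rw [← hT, add_mul, sum_add_distrib, sum_mul, mul_sum]
          rw [sum_comm (s := univ) (t := A), sum_comm (s := univ) (t := B),
            sum_comm (s := univ) (t := C)]
          simp only [mul_comm, mul_left_comm]
      _ = _ := by
          rw [sum_eq_zero (s := C) fun c hc => by rw [hu c hc, mul_zero], add_zero,
            Matrix.mul_apply, Fintype.sum_sum_type]
          simp only [Matrix.of_apply, Sum.elim_inl, Sum.elim_inr]
          rw [← sum_coe_sort A, ← sum_coe_sort B]
  have hrank : #{i | h i ≠ 0} ≤ #A + #B := by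
    rw [← Fintype.card_subtype, ← Matrix.rank_diagonal, hdiag]
    refine (Matrix.rank_mul_le_left _ _).trans ((Matrix.rank_le_card_width _).trans ?_)
    simp
  omega

theorem Finset.sum_mul_sum_fiberwise_of_maps_to {ι κ R : Type*} [NonUnitalNonAssocSemiring R]
    [DecidableEq κ] {s : Finset ι} {t : Finset κ} {g : ι → κ} (h : ∀ i ∈ s, g i ∈ t)
    (f : κ → R) (F : ι → R) :
    ∑ j ∈ t, f j * ∑ i ∈ s with g i = j, F i = ∑ i ∈ s, f (g i) * F i := by
  rw [← sum_fiberwise_of_maps_to h]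
  refine sum_congr rfl fun j _ => ?_
  rw [mul_sum]
  exact sum_congr rfl fun i hi => by rw [(mem_filter.1 hi).2]

theorem card_filter_sum_single_eq {σ : Type*} [Fintype σ] [DecidableEq σ] (n : ℕ)
    (d : σ →₀ ℕ) :
    #{e : Fin n → σ | ∑ i, Finsupp.single (e i) 1 = d} =
      if d.sum (fun _ m => m) = n then d.multinomial else 0 := by
  -- both sides are the coefficient of `X ^ d` in `(∑ j, X j) ^ n`
  have h := MvPolynomial.coeff_sum_X_pow_of_fintype (R := ℕ) d n
  rw [Nat.cast_id, ← Fin.prod_const, prod_univ_sum, Fintype.piFinset_univ,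
    MvPolynomial.coeff_sum] at h
  rw [← h, card_filter]
  refine sum_congr rfl fun e _ => ?_
  simp_rw [MvPolynomial.X, ← MvPolynomial.monomial_sum_one, MvPolynomial.coeff_monomial]

theorem card_filter_sum_single_eq_fin_three (n a b c : ℕ) (h : a + b + c = n) :
    #{e : Fin n → Fin 3 |
        ∑ i, Finsupp.single (e i) 1 = Finsupp.equivFunOnFinite.symm ![a, b, c]} =
      n.factorial / (a.factorial * b.factorial * c.factorial) := by
  rw [card_filter_sum_single_eq, Finsupp.sum_fintype _ _ fun _ => rfl,
    if_pos (by simp [Fin.sum_univ_three, h]),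
    Finsupp.multinomial_eq_of_support_subset (subset_univ _)]
  simp [Nat.multinomial_univ_three, h]

theorem exists_mul_pow_le_rpow {b c : ℝ} (C : ℝ) (hb : 1 < b) (hc : 0 < c) (hcb : c < b) :
    ∃ κ : ℝ, 0 < κ ∧ κ < 1 ∧ ∃ n₀ : ℕ, ∀ n ≥ n₀, C * c ^ n ≤ b ^ (κ * n) := by
  obtain ⟨c', hc'1, hcc', hc'b⟩ : ∃ c', 1 < c' ∧ c < c' ∧ c' < b :=
    ⟨(max c 1 + b) / 2, by linarith [le_max_right c 1], by linarith [le_max_left c 1],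
      by linarith [max_lt hcb hb]⟩
  obtain ⟨n₀, hn₀⟩ := pow_unbounded_of_one_lt C ((one_lt_div hc).2 hcc')
  refine ⟨Real.logb b c', Real.logb_pos hb hc'1, ?_, n₀, fun n hn => ?_⟩
  · rwa [Real.logb_lt_iff_lt_rpow hb (by linarith), Real.rpow_one]
  rw [Real.rpow_mul_natCast (by linarith), Real.rpow_logb (by linarith) hb.ne' (by linarith)]
  calc C * c ^ n ≤ (c' / c) ^ n * c ^ n := by
        gcongr
        exact hn₀.le.trans (pow_le_pow_right₀ ((one_lt_div hc).2 hcc').le hn)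
    _ = c' ^ n := by rw [← mul_pow, div_mul_cancel₀ _ hc.ne']

namespace CapSet

variable {n : ℕ}

def monomial (e : Fin n → Fin 3) (x : Fin n → ZMod 3) : ZMod 3 := ∏ i, x i ^ (e i : ℕ)

def degree (e : Fin n → Fin 3) : ℕ := ∑ i, (e i : ℕ)

def lowDegree (n : ℕ) : Finset (Fin n → Fin 3) := {e | 3 * degree e ≤ 2 * n}

/-- The coefficient of `u ^ a * v ^ b * w ^ c` in `1 - (u + v + w) ^ 2`. -/
def coeffOneSubSq : Fin 3 × Fin 3 × Fin 3 → ZMod 3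
  | (0, 0, 0) => 1
  | (2, 0, 0) | (0, 2, 0) | (0, 0, 2) => -1
  | (1, 1, 0) | (1, 0, 1) | (0, 1, 1) => -2
  | _ => 0

theorem one_sub_sq_add_add (u v w : ZMod 3) :
    1 - (u + v + w) ^ 2 =
      ∑ t, coeffOneSubSq t * u ^ (t.1 : ℕ) * v ^ (t.2.1 : ℕ) * w ^ (t.2.2 : ℕ) := by
  revert u v w
  decide

theorem add_add_le_two_of_coeffOneSubSq_ne_zero {t : Fin 3 × Fin 3 × Fin 3}
    (h : coeffOneSubSq t ≠ 0) : (t.1 : ℕ) + t.2.1 + t.2.2 ≤ 2 := by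
  revert t
  decide

theorem one_sub_sq_eq_ite (w : ZMod 3) : 1 - w ^ 2 = if w = 0 then 1 else 0 := by
  revert w
  decide

def coeff (γ : (Fin n → Fin 3) × (Fin n → Fin 3) × (Fin n → Fin 3)) : ZMod 3 :=
  ∏ i, coeffOneSubSq (γ.1 i, γ.2.1 i, γ.2.2 i)

theorem ite_add_add_eq_zero_eq_sum (x y z : Fin n → ZMod 3) :
    (if x + y + z = 0 then 1 else 0) =
      ∑ γ, coeff γ * monomial γ.1 x * monomial γ.2.1 y * monomial γ.2.2 z := by
  let split :
      (Fin n → Fin 3 × Fin 3 × Fin 3) ≃ (Fin n → Fin 3) × (Fin n → Fin 3) × (Fin n → Fin 3) :=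
    (Equiv.arrowProdEquivProdArrow _ _ _).trans
      ((Equiv.refl _).prodCongr (Equiv.arrowProdEquivProdArrow _ _ _))
  calc (if x + y + z = 0 then 1 else 0)
      = ∏ i, (1 - (x i + y i + z i) ^ 2) := by
        simp_rw [one_sub_sq_eq_ite, prod_boole, mem_univ, true_implies, funext_iff, Pi.add_apply,
          Pi.zero_apply]
    _ = ∑ γ : Fin n → Fin 3 × Fin 3 × Fin 3, ∏ i, (coeffOneSubSq (γ i) * x i ^ ((γ i).1 : ℕ) *
          y i ^ ((γ i).2.1 : ℕ) * z i ^ ((γ i).2.2 : ℕ)) := by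
        simp_rw [one_sub_sq_add_add, prod_univ_sum, Fintype.piFinset_univ]
    _ = _ := Fintype.sum_equiv split _ _ fun γ => by
        simp [split, coeff, monomial, prod_mul_distrib]

theorem degree_add_add_le_of_coeff_ne_zero
    {γ : (Fin n → Fin 3) × (Fin n → Fin 3) × (Fin n → Fin 3)} (h : coeff γ ≠ 0) :
    degree γ.1 + degree γ.2.1 + degree γ.2.2 ≤ 2 * n := by
  simp only [degree, ← sum_add_distrib]
  calc _ ≤ ∑ _i : Fin n, 2 := sum_le_sum fun i _ =>
        add_add_le_two_of_coeffOneSubSq_ne_zero (prod_ne_zero_iff.1 h i (mem_univ i))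
    _ = 2 * n := by simp [mul_comm]

theorem exists_lowDegree_slices (n : ℕ) :
    ∃ q s v : (Fin n → Fin 3) → (Fin n → ZMod 3) → (Fin n → ZMod 3) → ZMod 3, ∀ x y z,
      ∑ e ∈ lowDegree n, monomial e x * q e y z + ∑ e ∈ lowDegree n, monomial e y * s e x z +
        ∑ e ∈ lowDegree n, monomial e z * v e x y = if x + y + z = 0 then 1 else 0 := by
  classical
  set E := lowDegree n
  -- each monomial is charged to the first of its three factors of low degree
  let Γ : Finset ((Fin n → Fin 3) × (Fin n → Fin 3) × (Fin n → Fin 3)) := {γ | coeff γ ≠ 0}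
  let Γ₁ := Γ.filter (·.1 ∈ E)
  let Γ₂ := (Γ.filter (·.1 ∉ E)).filter (·.2.1 ∈ E)
  let Γ₃ := (Γ.filter (·.1 ∉ E)).filter (·.2.1 ∉ E)
  have h₃ : ∀ γ ∈ Γ₃, γ.2.2 ∈ E := by
    intro γ hγ
    simp only [Γ₃, Γ, E, lowDegree, mem_filter, mem_univ, true_and] at hγ ⊢
    have := degree_add_add_le_of_coeff_ne_zero hγ.1.1
    omega
  refine ⟨fun e y z => ∑ γ ∈ Γ₁ with γ.1 = e, coeff γ * monomial γ.2.1 y * monomial γ.2.2 z,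
    fun e x z => ∑ γ ∈ Γ₂ with γ.2.1 = e, coeff γ * monomial γ.1 x * monomial γ.2.2 z,
    fun e x y => ∑ γ ∈ Γ₃ with γ.2.2 = e, coeff γ * monomial γ.1 x * monomial γ.2.1 y,
    fun x y z => ?_⟩
  let F γ := coeff γ * monomial γ.1 x * monomial γ.2.1 y * monomial γ.2.2 z
  have hsplit : ∑ γ, F γ = ∑ γ ∈ Γ₁, F γ + (∑ γ ∈ Γ₂, F γ + ∑ γ ∈ Γ₃, F γ) := by
    rw [sum_filter_add_sum_filter_not, sum_filter_add_sum_filter_not]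
    exact (sum_filter_of_ne (p := (coeff · ≠ 0)) fun γ _ hF hγ => hF (by simp [F, hγ])).symm
  rw [sum_mul_sum_fiberwise_of_maps_to (fun γ hγ => (mem_filter.1 hγ).2),
    sum_mul_sum_fiberwise_of_maps_to (fun γ hγ => (mem_filter.1 hγ).2),
    sum_mul_sum_fiberwise_of_maps_to h₃, ite_add_add_eq_zero_eq_sum, hsplit, add_assoc]
  congr 1
  · exact sum_congr rfl fun γ _ => by ring
  congr 1 <;> exact sum_congr rfl fun γ _ => by ring

theorem add_add_eq_zero_iff {ι : Type*} (x y z : ι → ZMod 3) :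
    x + y + z = 0 ↔ x + z = y + y := by
  have hy : y + y = -y := funext fun i => by
    have : ∀ a : ZMod 3, a + a = -a := by decide
    exact this (y i)
  rw [hy, eq_neg_iff_add_eq_zero, add_right_comm]

theorem card_le_three_mul_card_lowDegree (S : Finset (Fin n → ZMod 3))
    (hS : ∀ x ∈ S, ∀ y ∈ S, ∀ z ∈ S, x + z = y + y → x = y ∧ y = z) :
    #S ≤ 3 * #(lowDegree n) := by
  obtain ⟨q, s, v, hslices⟩ := exists_lowDegree_slices n
  have hdiag (x y z : S) : (x : Fin n → ZMod 3) + y + z = 0 ↔ x = y ∧ y = z := by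
    rw [add_add_eq_zero_iff, Subtype.ext_iff, Subtype.ext_iff]
    refine ⟨hS x x.2 y y.2 z z.2, ?_⟩
    rintro ⟨hxy, hyz⟩
    rw [hxy, ← hyz]
  have := card_le_of_diagonal_eq_sum_slices (ι := S) (lowDegree n) (lowDegree n) (lowDegree n)
    (fun e x => monomial e x) (fun e y z => q e y z) (fun e y => monomial e y)
    (fun e x z => s e x z) (fun e z => monomial e z) (fun e x y => v e x y)
    fun x y z => by simp only [hslices, hdiag]
  rw [Fintype.card_coe] at this
  omega

theorem card_lowDegree (n : ℕ) :
    #(lowDegree n) = ∑ t ∈ (range (n + 1) ×ˢ range (n + 1) ×ˢ range (n + 1)).filter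
        (fun t => t.1 + t.2.1 + t.2.2 = n ∧ 3 * (t.2.1 + 2 * t.2.2) ≤ 2 * n),
      n.factorial / (t.1.factorial * t.2.1.factorial * t.2.2.factorial) := by
  let counts (e : Fin n → Fin 3) : Fin 3 →₀ ℕ := ∑ i, Finsupp.single (e i) 1
  have hcounts (e : Fin n → Fin 3) : counts e 0 + counts e 1 + counts e 2 = n ∧
      degree e = counts e 1 + 2 * counts e 2 := by
    have h₁ : ∀ v : Fin 3,
        ((if v = 0 then 1 else 0) + (if v = 1 then 1 else 0) + if v = 2 then 1 else 0) = 1 := by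
      decide
    have h₂ : ∀ v : Fin 3, (v : ℕ) = (if v = 1 then 1 else 0) + 2 * if v = 2 then 1 else 0 := by
      decide
    simp only [counts, degree, Finsupp.finsetSum_apply, Finsupp.single_apply, mul_sum,
      ← sum_add_distrib, h₁, ← h₂]
    simp
  rw [card_eq_sum_card_fiberwise (f := fun e => (counts e 0, counts e 1, counts e 2))]
  · refine sum_congr rfl fun ⟨a, b, c⟩ ht => ?_
    rw [mem_filter] at ht
    rw [← card_filter_sum_single_eq_fin_three n a b c ht.2.1]
    congr 1
    ext e
    simp only [mem_filter, mem_univ, true_and]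
    change _ ↔ counts e = _
    simp only [lowDegree, mem_filter, mem_univ, true_and, Prod.mk.injEq, Finsupp.ext_iff,
      Fin.forall_fin_succ, Finsupp.coe_equivFunOnFinite_symm, Fin.succ_zero_eq_one,
      Fin.succ_one_eq_two, Matrix.cons_val_zero, Matrix.cons_val_one, Matrix.cons_val_two,
      IsEmpty.forall_iff, and_true]
    exact and_iff_right_of_imp fun ⟨_, hb, hc⟩ => by rw [(hcounts e).2, hb, hc]; exact ht.2.2
  · intro e he
    have := hcounts e
    simp only [mem_coe, lowDegree, mem_filter, mem_univ, true_and, mem_product, mem_range] at he ⊢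
    omega

theorem card_lowDegree_le {t : ℝ} (ht₀ : 0 < t) (ht₁ : t ≤ 1) (n : ℕ) :
    (#(lowDegree n) : ℝ) ≤ ((1 + t ^ 3 + t ^ 6) / t ^ 2) ^ n := by
  -- Rankin's trick: weight each exponent vector by `t ^ (3 * degree e - 2 * n) ≥ 1`
  calc (#(lowDegree n) : ℝ) = ∑ e ∈ lowDegree n, 1 := by simp
    _ ≤ ∑ e ∈ lowDegree n, (t ^ 2)⁻¹ ^ n * (t ^ 3) ^ degree e := by
        refine sum_le_sum fun e he => ?_
        rw [lowDegree, mem_filter] at he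
        rw [inv_pow, ← pow_mul, ← pow_mul, inv_mul_eq_div, one_le_div (by positivity)]
        exact pow_le_pow_of_le_one ht₀.le ht₁ (by linarith [he.2])
    _ ≤ ∑ e, (t ^ 2)⁻¹ ^ n * (t ^ 3) ^ degree e :=
        sum_le_sum_of_subset_of_nonneg (subset_univ _) fun _ _ _ => by positivity
    _ = ((1 + t ^ 3 + t ^ 6) / t ^ 2) ^ n := by
        simp_rw [← mul_sum, degree, ← prod_pow_eq_pow_sum]
        rw [← Fintype.prod_sum fun (_ : Fin n) (j : Fin 3) => (t ^ 3) ^ (j : ℕ)]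
        simp [Fin.sum_univ_three, div_eq_inv_mul, mul_pow, ← pow_mul]

end CapSet

/-- Tao's slice-rank bound for cap sets: a progression-free subset of `𝔽_3^n` has size
at most `3 · ∑ n!/(a!b!c!)` over non-negative `a+b+c = n` with `b+2c ≤ 2n/3`;
consequently `|S| ≤ 3^{κn}` for some `0 < κ < 1` and all large `n`. -/
theorem tao_slice_rank_capset_bound :
    (∀ n : ℕ, 1 ≤ n →
      ∀ S : Finset (Fin n → ZMod 3),
        (∀ x ∈ S, ∀ y ∈ S, ∀ z ∈ S, x + z = y + y → x = y ∧ y = z) →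
        S.card ≤ 3 * ∑ t ∈ (Finset.range (n + 1) ×ˢ Finset.range (n + 1) ×ˢ
              Finset.range (n + 1)).filter
            (fun t => t.1 + t.2.1 + t.2.2 = n ∧ 3 * (t.2.1 + 2 * t.2.2) ≤ 2 * n),
          n.factorial / (t.1.factorial * t.2.1.factorial * t.2.2.factorial)) ∧
    (∃ κ : ℝ, 0 < κ ∧ κ < 1 ∧ ∃ n₀ : ℕ, ∀ n : ℕ, n₀ ≤ n →
      ∀ S : Finset (Fin n → ZMod 3),
        (∀ x ∈ S, ∀ y ∈ S, ∀ z ∈ S, x + z = y + y → x = y ∧ y = z) →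
        (S.card : ℝ) ≤ (3 : ℝ) ^ (κ * n)) := by
  refine ⟨fun n _ S hS =>
    CapSet.card_lowDegree n ▸ CapSet.card_le_three_mul_card_lowDegree S hS, ?_⟩
  obtain ⟨κ, hκ₀, hκ₁, n₀, hn₀⟩ :=
    exists_mul_pow_le_rpow (b := 3) (c := 6553 / 2304) 3 (by norm_num) (by norm_num) (by norm_num)
  refine ⟨κ, hκ₀, hκ₁, n₀, fun n hn S hS => ?_⟩
  have hE := CapSet.card_lowDegree_le (t := 3 / 4) (by norm_num) (by norm_num) n
  norm_num at hE
  calc (S.card : ℝ) ≤ 3 * #(CapSet.lowDegree n) := by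
        exact_mod_cast CapSet.card_le_three_mul_card_lowDegree S hS
    _ ≤ 3 * (6553 / 2304) ^ n := by gcongr
    _ ≤ 3 ^ (κ * n) := hn₀ n hn
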